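/- arXiv:0811.2754 — 2 statements merged into one kernel-verified Lean document; each statement's English description precedes it below -/
import Mathlib

section
/- Let O be a set of subsets of U and let X ⊆ U be nonempty and downward ⪯_s-closed. Then X is a union of intersections of members of O relativized to U: there is a family (O_i)_{i∈I} of subsets of O with X = (⋃_i ⋂ O_i) ∩ U (with the convention ⋂∅ = U). -/
/-!
Every `x` lies in `⋂ O(x)`, and for `x ∈ X` downward closure gives `⋂ O(x) ⊆ X`, since any
`y ∈ ⋂ O(x)` satisfies `O(x) ⊆ O(y)`. Hence `X = ⋃_{x ∈ X} ⋂ O(x)`. As `O` is finite there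
are only finitely many sets `O(x)`, so this union can be indexed by some `Fin n`.
-/

/-- The set of obligations satisfied by x. -/
def Obls {α : Type*} (O : Set (Set α)) (x : α) : Set (Set α) := {A ∈ O | x ∈ A}

open Set

namespace Obls

variable {α : Type*} {O : Set (Set α)}

theorem subset (x : α) : Obls O x ⊆ O := fun _ hA => hA.1

theorem mem_sInter_self (x : α) : x ∈ ⋂₀ Obls O x := fun _ hA => hA.2

theorem subset_of_mem_sInter {x y : α} (hy : y ∈ ⋂₀ Obls O x) : Obls O x ⊆ Obls O y :=
  fun A hA => ⟨hA.1, hy A hA⟩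

theorem finite_image (hO : O.Finite) (X : Set α) : (Obls O '' X).Finite :=
  hO.finite_subsets.subset <| image_subset_iff.2 fun x _ => subset x

theorem biUnion_image_sInter_eq {X : Set α}
    (hcl : ∀ x ∈ X, ∀ y : α, Obls O x ⊆ Obls O y → y ∈ X) :
    ⋃ S ∈ Obls O '' X, ⋂₀ S = X := by
  rw [biUnion_image]
  refine Subset.antisymm (iUnion₂_subset fun x hx y hy => ?_) fun x hx => ?_
  · exact hcl x hx y (subset_of_mem_sInter hy)
  · exact mem_biUnion hx (mem_sInter_self x)

end Obls

theorem stmt18_general {α : Type*} (O : Set (Set α)) (hO : O.Finite) (X : Set α)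
    (hcl : ∀ x ∈ X, ∀ y : α, Obls O x ⊆ Obls O y → y ∈ X) :
    ∃ (ι : Type) (f : ι → Set (Set α)), (∀ i, f i ⊆ O) ∧
      X = (⋃ i, ⋂₀ f i) ∩ Set.univ := by
  obtain ⟨n, f, hf⟩ := (Obls.finite_image hO X).fin_embedding
  refine ⟨Fin n, f, fun i => ?_, ?_⟩
  · obtain ⟨x, -, hx⟩ : f i ∈ Obls O '' X := hf ▸ mem_range_self i
    exact hx ▸ Obls.subset x
  · rw [inter_univ, ← biUnion_range, hf, Obls.biUnion_image_sInter_eq hcl]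

/-- a nonempty downward ⪯_s-closed set is a union of intersections
of obligations (relativized to the universe; ⋂∅ = univ). -/
theorem stmt18 {α : Type*} (O : Set (Set α)) (hO : O.Finite) (X : Set α)
    (hne : X.Nonempty)
    (hcl : ∀ x ∈ X, ∀ y : α, Obls O x ⊆ Obls O y → y ∈ X) :
    ∃ (ι : Type) (f : ι → Set (Set α)), (∀ i, f i ⊆ O) ∧
      X = (⋃ i, ⋂₀ f i) ∩ Set.univ :=
  stmt18_general O hO X hcl
end

section
/- Assume the system O of obligations over U is independent: for every function δ : O → {0,1} there exists m ∈ U with m ∈ O' iff δ(O')=1 for all O' ∈ O. If X ⊆ U is nonempty and downward ⪯_s-closed, then X ≺_{l,s} (U \ X): for x ∈ X, every closest element y of U\X satisfies x ≺_s y, and for y ∈ U\X, every closest element x of X satisfies x ≺_s y. -/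
/-- Set Hamming distance generated by O. -/
def dS {α : Type*} (O : Set (Set α)) (x y : α) : Set (Set α) :=
  symmDiff (Obls O x) (Obls O y)

/-- x ∥ Y: the elements of Y closest to x (no other element of Y is at
smaller-or-equal set distance). -/
def closestS {α : Type*} (O : Set (Set α)) (x : α) (Y : Set α) : Set α :=
  {y ∈ Y | ¬ ∃ y' ∈ Y, y' ≠ y ∧ dS O x y' ⊆ dS O x y}

/-- X ≺_{l,s} Y: X is locally better than Y. -/
def LocBetterS {α : Type*} (O : Set (Set α)) (X Y : Set α) : Prop :=
  (∀ x ∈ X, ∀ y ∈ closestS O x Y, Obls O y ⊂ Obls O x) ∧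
  (∀ y ∈ Y, ∀ x ∈ closestS O y X, Obls O y ⊂ Obls O x)

lemma symmDiff_inf_right_le {β : Type*} [GeneralizedBooleanAlgebra β] (a b : β) :
    symmDiff a (a ⊓ b) ≤ symmDiff a b := by
  rw [symmDiff_of_ge inf_le_left, sdiff_inf_self_left]
  exact le_sup_left

lemma symmDiff_sup_left_le {β : Type*} [GeneralizedBooleanAlgebra β] (a b : β) :
    symmDiff b (a ⊔ b) ≤ symmDiff b a := by
  rw [symmDiff_of_le le_sup_right, sup_sdiff_right_self]
  exact le_sup_right

lemma obls_subset {α : Type*} (O : Set (Set α)) (x : α) : Obls O x ⊆ O := fun _ hA => hA.1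

section Obligations

variable {α : Type*} {O : Set (Set α)}

lemma exists_obls_eq
    (hind : ∀ δ : Set α → Bool, ∃ m : α, ∀ A ∈ O, (m ∈ A ↔ δ A = true))
    {S : Set (Set α)} (hS : S ⊆ O) : ∃ z : α, Obls O z = S := by
  classical
  obtain ⟨m, hm⟩ := hind fun A => decide (A ∈ S)
  refine ⟨m, Set.ext fun A => ⟨fun ⟨hAO, hmA⟩ => ?_, fun hAS => ⟨hS hAS, ?_⟩⟩⟩
  · simpa using (hm A hAO).1 hmA
  · exact (hm A (hS hAS)).2 (by simpa using hAS)

lemma eq_of_mem_closestS {x y z : α} {Y : Set α} (hy : y ∈ closestS O x Y) (hz : z ∈ Y)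
    (hd : dS O x z ⊆ dS O x y) : z = y := by
  by_contra hzy
  exact hy.2 ⟨z, hz, hzy, hd⟩

variable {X : Set α} (hcl : ∀ x ∈ X, ∀ y : α, Obls O x ⊆ Obls O y → y ∈ X)
include hcl

/-- The element realising `O(x) ∩ O(y)` is at most as far from `x` as `y` is and lies outside `X`
(otherwise `y` would be in `X`), so closestness forces it to be `y`. -/
lemma obls_ssubset_of_mem_closestS_compl
    (hind : ∀ δ : Set α → Bool, ∃ m : α, ∀ A ∈ O, (m ∈ A ↔ δ A = true))
    {x y : α} (hx : x ∈ X) (hy : y ∈ closestS O x Xᶜ) : Obls O y ⊂ Obls O x := by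
  obtain ⟨z, hz⟩ := exists_obls_eq hind ((Set.inter_subset_left).trans (obls_subset O x))
  have hzX : z ∉ X := fun hzX => hy.1 (hcl z hzX y (hz ▸ Set.inter_subset_right))
  have hzy : z = y := eq_of_mem_closestS hy hzX (by
    rw [dS, dS, hz]
    exact symmDiff_inf_right_le _ _)
  have hyx : Obls O y ⊆ Obls O x := by
    rw [← hzy, hz]
    exact Set.inter_subset_left
  exact ⟨hyx, fun hxy => hy.1 (hcl x hx y hxy)⟩

/-- Dually, the element realising `O(x) ∪ O(y)` lies in `X` and is at most as far from `y` as `x`. -/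
lemma obls_ssubset_of_mem_closestS
    (hind : ∀ δ : Set α → Bool, ∃ m : α, ∀ A ∈ O, (m ∈ A ↔ δ A = true))
    {x y : α} (hy : y ∉ X) (hx : x ∈ closestS O y X) : Obls O y ⊂ Obls O x := by
  obtain ⟨z, hz⟩ := exists_obls_eq hind (Set.union_subset (obls_subset O x) (obls_subset O y))
  have hzX : z ∈ X := hcl x hx.1 z (hz ▸ Set.subset_union_left)
  have hzx : z = x := eq_of_mem_closestS hx hzX (by
    rw [dS, dS, hz]
    exact symmDiff_sup_left_le _ _)
  have hyx : Obls O y ⊆ Obls O x := by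
    conv_rhs => rw [← hzx, hz]
    exact Set.subset_union_right
  exact ⟨hyx, fun hxy => hy (hcl x hx.1 y hxy)⟩

end Obligations

theorem stmt19_general {α : Type*} (O : Set (Set α))
    (hind : ∀ δ : Set α → Bool, ∃ m : α, ∀ A ∈ O, (m ∈ A ↔ δ A = true))
    (X : Set α)
    (hcl : ∀ x ∈ X, ∀ y : α, Obls O x ⊆ Obls O y → y ∈ X) :
    LocBetterS O X Xᶜ :=
  ⟨fun _ hx _ hy => obls_ssubset_of_mem_closestS_compl hcl hind hx hy,
    fun _ hy _ hx => obls_ssubset_of_mem_closestS hcl hind hy hx⟩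

/-- if the system O is independent, then any nonempty downward
⪯_s-closed X is locally better than its complement. -/
theorem stmt19 {α : Type*} (O : Set (Set α)) (hO : O.Finite)
    (hind : ∀ δ : Set α → Bool, ∃ m : α, ∀ A ∈ O, (m ∈ A ↔ δ A = true))
    (X : Set α) (hne : X.Nonempty)
    (hcl : ∀ x ∈ X, ∀ y : α, Obls O x ⊆ Obls O y → y ∈ X) :
    LocBetterS O X Xᶜ :=
  stmt19_general O hind X hcl
end
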